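/- arXiv:2508.20079 — 2 statements merged into one kernel-verified Lean document; each statement's English description precedes it below -/
import Mathlib

section
/- Let n ≥ 4 and let v be uniformly distributed on the unit sphere S^{n-1} ⊆ ℝ^n. For any nonzero x ∈ ℝ^n and r with 0 < r ≤ ‖x‖, P[x·v ≤ r] ≥ 1 - τ_n · (‖x‖/(r(n-3))) · e^{-r²(n-3)/(2‖x‖²)}, where τ_n = Γ(n/2)/(√π · Γ((n-1)/2)). -/
open MeasureTheory Metric
open scoped RealInnerProductSpace

/-- The uniform (rotation-invariant) probability measure on the unit sphere in `ℝⁿ`,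
obtained by normalizing the surface measure `Measure.toSphere` of Lebesgue measure. -/
noncomputable def uniformSphere (n : ℕ) :
    Measure (sphere (0 : EuclideanSpace ℝ (Fin n)) 1) :=
  ((volume : Measure (EuclideanSpace ℝ (Fin n))).toSphere Set.univ)⁻¹ •
    (volume : Measure (EuclideanSpace ℝ (Fin n))).toSphere

/-!
Write `n = m + 1`, `u = x / ‖x‖` and `s = r / ‖x‖`. The complementary event `s < ⟪u, v⟫` is a
spherical cap, and its normalized surface measure is the volume of the cone
`{y | ‖y‖ < 1 ∧ s‖y‖ < ⟪u, y⟫}` divided by the volume `ωₙ` of the unit ball. After a rotation taking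
`u` to the first basis vector, the slice of the cone at height `a` is an `m`-ball of radius at most
`min (a √(1 - s²) / s) √(1 - a²)`. Using `√(1 - a²) ≤ exp (-a² / 2)` on `[s, 1]` and the first
radius on `[0, s]`, the cone has volume at most `ωₘ e^{-s²m/2} (s / (m + 1) + 1 / (s m))`.
Finally `ωₘ / ωₘ₊₁ = (m + 1) / m · τₙ` and `e^{-s²} (1 + s²) ≤ 1` give the stated bound.
-/

open Real Set
open scoped ENNReal Pointwise

instance {n : ℕ} [NeZero n] : IsProbabilityMeasure (uniformSphere n) :=
  have : NeZero (volume : Measure (EuclideanSpace ℝ (Fin n))).toSphere :=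
    ⟨Measure.toSphere_ne_zero _⟩
  isProbabilityMeasureSMul

theorem uniformSphere_apply {n : ℕ} [NeZero n]
    {A : Set (sphere (0 : EuclideanSpace ℝ (Fin n)) 1)} (hA : MeasurableSet A) :
    uniformSphere n A =
      volume (Ioo (0 : ℝ) 1 • (Subtype.val '' A)) /
        volume (ball (0 : EuclideanSpace ℝ (Fin n)) 1) := by
  have hdim : (Module.finrank ℝ (EuclideanSpace ℝ (Fin n)) : ℝ≥0∞) ≠ 0 := by simp [NeZero.ne n]
  rw [uniformSphere, Measure.smul_apply, smul_eq_mul, Measure.toSphere_apply_univ,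
    Measure.toSphere_apply' _ hA, ENNReal.mul_inv (.inr measure_ball_lt_top.ne) (.inl (by simp)),
    mul_mul_mul_comm, ENNReal.inv_mul_cancel hdim (by simp), one_mul, mul_comm, div_eq_mul_inv]

theorem Ioo_smul_image_coe_setOf_lt_inner {E : Type*} [NormedAddCommGroup E]
    [InnerProductSpace ℝ E] (u : E) (s : ℝ) :
    Ioo (0 : ℝ) 1 • (Subtype.val '' {v : sphere (0 : E) 1 | s < ⟪u, v⟫}) =
      {y | ‖y‖ < 1 ∧ s * ‖y‖ < ⟪u, y⟫} := by
  ext y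
  constructor
  · rintro ⟨c, ⟨hc0, hc1⟩, -, ⟨v, hv, rfl⟩, rfl⟩
    have hcv : ‖c • (v : E)‖ = c := by simp [norm_smul, abs_of_pos hc0]
    rw [mem_ofPred_eq, hcv, real_inner_smul_right]
    exact ⟨hc1, by nlinarith [hv.out]⟩
  · rintro ⟨hy1, hy⟩
    have hy0 : 0 < ‖y‖ := norm_pos_iff.2 fun h => by simp [h] at hy
    refine ⟨‖y‖, ⟨hy0, hy1⟩, _, ⟨⟨‖y‖⁻¹ • y, by simp [norm_smul, hy0.ne']⟩, ?_, rfl⟩, ?_⟩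
    · rw [mem_ofPred_eq, real_inner_smul_right, lt_inv_mul_iff₀ hy0, mul_comm]
      exact hy
    · simp [smul_smul, hy0.ne']

theorem exists_linearIsometryEquiv_inner_eq_apply_zero {m : ℕ}
    {u : EuclideanSpace ℝ (Fin (m + 1))} (hu : ‖u‖ = 1) :
    ∃ e : EuclideanSpace ℝ (Fin (m + 1)) ≃ₗᵢ[ℝ] EuclideanSpace ℝ (Fin (m + 1)),
      ∀ y, ⟪u, y⟫ = e y 0 := by
  have horth : Orthonormal ℝ (({0} : Set (Fin (m + 1))).domRestrict fun _ => u) :=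
    ⟨fun _ => hu, fun i j hij => (hij (Subsingleton.elim i j)).elim⟩
  obtain ⟨b, hb⟩ := horth.exists_orthonormalBasis_extension_of_card_eq (by simp)
  exact ⟨b.repr, fun y => by rw [b.repr_apply_apply, hb 0 rfl]⟩

theorem EuclideanSpace.norm_sq_toLp_cons {m : ℕ} (a : ℝ) (w : EuclideanSpace ℝ (Fin m)) :
    ‖(WithLp.toLp 2 (Fin.cons a w.ofLp : Fin (m + 1) → ℝ))‖ ^ 2 = a ^ 2 + ‖w‖ ^ 2 := by
  simp [EuclideanSpace.norm_sq_eq, Fin.sum_univ_succ]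

theorem EuclideanSpace.volume_eq_lintegral_volume_slice {m : ℕ}
    {S : Set (EuclideanSpace ℝ (Fin (m + 1)))} (hS : MeasurableSet S) :
    volume S = ∫⁻ a, volume {w : EuclideanSpace ℝ (Fin m) |
      WithLp.toLp 2 (Fin.cons a w.ofLp : Fin (m + 1) → ℝ) ∈ S} := by
  set e := (MeasurableEquiv.piFinSuccAbove (fun _ : Fin (m + 1) => ℝ) 0).symm
  have hT : MeasurableSet (e ⁻¹' (WithLp.toLp 2 ⁻¹' S)) :=
    (WithLp.measurable_toLp 2 _ hS).preimage e.measurable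
  rw [← (PiLp.volume_preserving_toLp _).measure_preimage hS.nullMeasurableSet,
    ← ((volume_preserving_piFinSuccAbove _ 0).symm _).measure_preimage_equiv,
    Measure.volume_eq_prod, Measure.prod_apply hT]
  refine lintegral_congr fun a => ?_
  rw [← (PiLp.volume_preserving_ofLp _).measure_preimage
    (measurable_prodMk_left hT).nullMeasurableSet]
  congr 1
  ext w
  simp only [mem_preimage, e, MeasurableEquiv.piFinSuccAbove_symm_apply, Fin.insertNthEquiv_zero]
  rfl

/-- A bound for the radius of the slice at height `a` of the cone `{y | ‖y‖ < 1 ∧ s * ‖y‖ < y 0}`: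
the first term comes from the cone, the second from the unit ball. -/
noncomputable def capRadius (s a : ℝ) : ℝ := min (a * √(1 - s ^ 2) / s) √(1 - a ^ 2)

section CapRadius

variable {s : ℝ}

theorem capRadius_nonneg (hs : 0 < s) {a : ℝ} (ha : 0 ≤ a) : 0 ≤ capRadius s a :=
  le_min (by positivity) (sqrt_nonneg _)

theorem continuous_capRadius (s : ℝ) : Continuous (capRadius s) :=
  ((continuous_id.mul continuous_const).div_const s).min
    (continuous_sqrt.comp (continuous_const.sub (continuous_pow 2)))

theorem lt_capRadius_of_lt (hs : 0 < s) {a ρ : ℝ}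
    (h1 : √(a ^ 2 + ρ ^ 2) < 1) (h2 : s * √(a ^ 2 + ρ ^ 2) < a) :
    a ∈ Ioo 0 1 ∧ ρ < capRadius s a := by
  have ht := sq_sqrt (by positivity : 0 ≤ a ^ 2 + ρ ^ 2)
  have ha0 : 0 < a := lt_of_le_of_lt (by positivity) h2
  have hball : a ^ 2 + ρ ^ 2 < 1 := by nlinarith [sqrt_nonneg (a ^ 2 + ρ ^ 2)]
  have hcone : s ^ 2 * (a ^ 2 + ρ ^ 2) < a ^ 2 := by
    simpa [mul_pow, ht] using pow_lt_pow_left₀ h2 (by positivity) two_ne_zero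
  refine ⟨⟨ha0, by nlinarith⟩, lt_min ?_ (lt_sqrt_of_sq_lt (by linarith))⟩
  rw [lt_div_iff₀ hs]
  refine lt_of_pow_lt_pow_left₀ 2 (by positivity) ?_
  rw [mul_pow a, sq_sqrt (by nlinarith)]
  nlinarith

theorem volume_slice_cone_le {m : ℕ} (hs : 0 < s) (a : ℝ) :
    volume {w : EuclideanSpace ℝ (Fin m) |
        WithLp.toLp 2 (Fin.cons a w.ofLp : Fin (m + 1) → ℝ) ∈
          {y : EuclideanSpace ℝ (Fin (m + 1)) | ‖y‖ < 1 ∧ s * ‖y‖ < y 0}} ≤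
      (Ioo 0 1).indicator
        (fun a => volume (ball (0 : EuclideanSpace ℝ (Fin m)) (capRadius s a))) a := by
  have hnorm : ∀ w : EuclideanSpace ℝ (Fin m),
      ‖(WithLp.toLp 2 (Fin.cons a w.ofLp : Fin (m + 1) → ℝ))‖ = √(a ^ 2 + ‖w‖ ^ 2) := fun w => by
    rw [← EuclideanSpace.norm_sq_toLp_cons, sqrt_sq (norm_nonneg _)]
  by_cases ha : a ∈ Ioo 0 1
  · rw [indicator_of_mem ha]
    refine measure_mono fun w ⟨h1, h2⟩ => ?_
    rw [hnorm] at h1 h2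
    simpa using (lt_capRadius_of_lt hs h1 (by simpa using h2)).2
  · rw [indicator_of_notMem ha, nonpos_iff_eq_zero, measure_eq_zero_iff_ae_notMem]
    refine Filter.Eventually.of_forall fun w ⟨h1, h2⟩ => ha ?_
    rw [hnorm] at h1 h2
    exact (lt_capRadius_of_lt hs h1 (by simpa using h2)).1

theorem volume_cone_le {m : ℕ} [NeZero m] (hs : 0 < s) {u : EuclideanSpace ℝ (Fin (m + 1))}
    (hu : ‖u‖ = 1) :
    volume {y : EuclideanSpace ℝ (Fin (m + 1)) | ‖y‖ < 1 ∧ s * ‖y‖ < ⟪u, y⟫} ≤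
      ENNReal.ofReal (√π ^ m / Gamma (m / 2 + 1) * ∫ a in Ioo 0 1, capRadius s a ^ m) := by
  obtain ⟨e, he⟩ := exists_linearIsometryEquiv_inner_eq_apply_zero hu
  set C := {y : EuclideanSpace ℝ (Fin (m + 1)) | ‖y‖ < 1 ∧ s * ‖y‖ < y 0}
  have hC : MeasurableSet C := by
    simp only [C, ofPred_and]
    exact (measurableSet_lt (by fun_prop) measurable_const).inter
      (measurableSet_lt (by fun_prop) (by fun_prop))
  have hrot : {y | ‖y‖ < 1 ∧ s * ‖y‖ < ⟪u, y⟫} = e ⁻¹' C := by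
    ext y
    simp [C, he]
  have hint : IntegrableOn (fun a => capRadius s a ^ m) (Ioo 0 1) :=
    ((continuous_capRadius s).pow m).integrableOn_Icc.mono_set Ioo_subset_Icc_self
  rw [hrot, e.measurePreserving.measure_preimage hC.nullMeasurableSet,
    EuclideanSpace.volume_eq_lintegral_volume_slice hC, ENNReal.ofReal_mul (by positivity),
    ofReal_integral_eq_lintegral_ofReal hint ((ae_restrict_mem measurableSet_Ioo).mono
      fun a ha => pow_nonneg (capRadius_nonneg hs ha.1.le) m),
    ← lintegral_const_mul' _ _ ENNReal.ofReal_ne_top, ← lintegral_indicator measurableSet_Ioo]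
  refine lintegral_mono fun a =>
    (volume_slice_cone_le hs a).trans_eq (congrFun (indicator_congr fun a ha => ?_) a)
  rw [EuclideanSpace.volume_ball, Fintype.card_fin,
    ENNReal.ofReal_pow (capRadius_nonneg hs ha.1.le), mul_comm]

end CapRadius

theorem sqrt_one_sub_sq_pow_le_exp (t : ℝ) (m : ℕ) :
    √(1 - t ^ 2) ^ m ≤ exp (-(t ^ 2 * m) / 2) := by
  have h : √(1 - t ^ 2) ≤ exp (-t ^ 2 / 2) := by
    rw [exp_half]
    exact sqrt_le_sqrt (by linarith [add_one_le_exp (-t ^ 2)])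
  calc √(1 - t ^ 2) ^ m ≤ exp (-t ^ 2 / 2) ^ m := pow_le_pow_left₀ (sqrt_nonneg _) h m
    _ = exp (-(t ^ 2 * m) / 2) := by rw [← exp_nat_mul]; ring_nf

theorem integral_mul_exp_neg_sq_mul {b : ℝ} (hb : b ≠ 0) (s t : ℝ) :
    ∫ a in s..t, a * exp (-(a ^ 2 * b) / 2) =
      (exp (-(s ^ 2 * b) / 2) - exp (-(t ^ 2 * b) / 2)) / b := by
  have hderiv : ∀ a : ℝ,
      HasDerivAt (fun a => -exp (-(a ^ 2 * b) / 2) / b) (a * exp (-(a ^ 2 * b) / 2)) a :=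
    fun a => by
      refine ((((hasDerivAt_pow 2 a).mul_const b).neg.div_const 2).exp.neg.div_const
        b).congr_deriv ?_
      simp only [Pi.neg_apply]
      field_simp
      ring
  rw [intervalIntegral.integral_eq_sub_of_hasDerivAt (fun a _ => hderiv a)
    (Continuous.intervalIntegrable (by fun_prop) _ _)]
  ring

section CapIntegral

variable {s : ℝ} (m : ℕ)

theorem capRadius_pow_le_exp (hs : 0 < s) {a : ℝ} (ha : 0 ≤ a) :
    capRadius s a ^ m ≤ exp (-(a ^ 2 * m) / 2) :=
  (pow_le_pow_left₀ (capRadius_nonneg hs ha) (min_le_right _ _) m).trans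
    (sqrt_one_sub_sq_pow_le_exp a m)

theorem integral_capRadius_pow_le_of_le (hs : 0 < s) :
    ∫ a in (0)..s, capRadius s a ^ m ≤ exp (-(s ^ 2 * m) / 2) * (s / (m + 1)) := calc
  ∫ a in (0)..s, capRadius s a ^ m ≤ ∫ a in (0)..s, (√(1 - s ^ 2) / s) ^ m * a ^ m := by
    refine intervalIntegral.integral_mono_on hs.le
      (((continuous_capRadius s).pow m).intervalIntegrable _ _)
      ((continuous_const.mul (continuous_pow m)).intervalIntegrable _ _) fun a ha => ?_
    rw [← mul_pow]
    exact pow_le_pow_left₀ (capRadius_nonneg hs ha.1) ((min_le_left _ _).trans_eq (by ring)) m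
  _ = √(1 - s ^ 2) ^ m * (s / (m + 1)) := by
    rw [intervalIntegral.integral_const_mul, integral_pow, div_pow]
    field_simp
    ring
  _ ≤ exp (-(s ^ 2 * m) / 2) * (s / (m + 1)) :=
    mul_le_mul_of_nonneg_right (sqrt_one_sub_sq_pow_le_exp s m) (by positivity)

theorem integral_capRadius_pow_le_of_ge (hs0 : 0 < s) (hs1 : s ≤ 1) (hm : m ≠ 0) :
    ∫ a in s..1, capRadius s a ^ m ≤ exp (-(s ^ 2 * m) / 2) * (1 / (s * m)) := calc
  ∫ a in s..1, capRadius s a ^ m ≤ ∫ a in s..1, s⁻¹ * (a * exp (-(a ^ 2 * m) / 2)) := by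
    refine intervalIntegral.integral_mono_on hs1
      (((continuous_capRadius s).pow m).intervalIntegrable _ _)
      (Continuous.intervalIntegrable (by fun_prop) _ _) fun a ha => ?_
    have ha0 : 0 < a := hs0.trans_le ha.1
    calc capRadius s a ^ m ≤ exp (-(a ^ 2 * m) / 2) := capRadius_pow_le_exp m hs0 ha0.le
      _ ≤ s⁻¹ * a * exp (-(a ^ 2 * m) / 2) :=
        le_mul_of_one_le_left (exp_pos _).le ((one_le_inv_mul₀ hs0).2 ha.1)
      _ = s⁻¹ * (a * exp (-(a ^ 2 * m) / 2)) := mul_assoc _ _ _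
  _ = s⁻¹ * ((exp (-(s ^ 2 * m) / 2) - exp (-(1 ^ 2 * m) / 2)) / m) := by
    rw [intervalIntegral.integral_const_mul, integral_mul_exp_neg_sq_mul (Nat.cast_ne_zero.2 hm)]
  _ ≤ exp (-(s ^ 2 * m) / 2) * (1 / (s * m)) := by
    have hsm : 0 < s * m := by positivity
    rw [mul_one_div, inv_mul_eq_div, div_div, mul_comm (m : ℝ),
      div_le_div_iff_of_pos_right hsm]
    linarith [exp_pos (-(1 ^ 2 * m : ℝ) / 2)]

theorem integral_capRadius_pow_le (hs0 : 0 < s) (hs1 : s ≤ 1) (hm : m ≠ 0) :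
    ∫ a in Ioo 0 1, capRadius s a ^ m ≤ exp (-(s ^ 2 * m) / 2) * (s / (m + 1) + 1 / (s * m)) := by
  have hint : ∀ a b, IntervalIntegrable (fun a => capRadius s a ^ m) volume a b := fun _ _ =>
    ((continuous_capRadius s).pow m).intervalIntegrable _ _
  rw [← integral_Ioc_eq_integral_Ioo, ← intervalIntegral.integral_of_le zero_le_one,
    ← intervalIntegral.integral_add_adjacent_intervals (hint 0 s) (hint s 1), mul_add]
  exact add_le_add (integral_capRadius_pow_le_of_le m hs0)
    (integral_capRadius_pow_le_of_ge m hs0 hs1 hm)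

end CapIntegral

theorem sqrt_pi_pow_div_Gamma_div_succ {m : ℕ} (hm : m ≠ 0) :
    (√π ^ m / Gamma (m / 2 + 1)) / (√π ^ (m + 1) / Gamma ((m + 1 : ℕ) / 2 + 1)) =
      (m + 1) / m * (Gamma ((m + 1) / 2) / (√π * Gamma (m / 2))) := by
  have : 0 < Gamma (m / 2) := Gamma_pos_of_pos (by positivity)
  have : 0 < Gamma ((m + 1) / 2) := Gamma_pos_of_pos (by positivity)
  have : 0 < √π := sqrt_pos.2 pi_pos
  push_cast
  rw [Gamma_add_one (by positivity), Gamma_add_one (by positivity)]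
  field_simp
  ring

theorem succ_div_mul_exp_mul_le {m s : ℝ} (hm : 2 < m) (hs : 0 < s) :
    (m + 1) / m * (exp (-(s ^ 2 * m) / 2) * (s / (m + 1) + 1 / (s * m))) ≤
      1 / (s * (m - 2)) * exp (-(s ^ 2 * (m - 2)) / 2) := by
  have hq : exp (-s ^ 2) * (1 + s ^ 2) ≤ 1 := by
    calc exp (-s ^ 2) * (1 + s ^ 2) ≤ exp (-s ^ 2) * exp (s ^ 2) := by
          gcongr; linarith [add_one_le_exp (s ^ 2)]
      _ = 1 := by rw [← exp_add, neg_add_cancel, exp_zero]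
  have key : exp (-s ^ 2) * ((s ^ 2 * m + m + 1) * (m - 2)) ≤ m ^ 2 := by
    nlinarith [exp_pos (-s ^ 2), mul_le_mul_of_nonneg_left
      (by nlinarith : (s ^ 2 * m + m + 1) * (m - 2) ≤ m ^ 2 * (1 + s ^ 2)) (exp_pos (-s ^ 2)).le]
  rw [show -(s ^ 2 * m) / 2 = -(s ^ 2 * (m - 2)) / 2 + -s ^ 2 by ring, exp_add]
  have hE := exp_pos (-(s ^ 2 * (m - 2)) / 2)
  have hm0 : 0 < m - 2 := by linarith
  field_simp
  nlinarith [mul_le_mul_of_nonneg_left key hE.le]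

theorem uniformSphere_inner_gt_le {m : ℕ} (hm : 3 ≤ m) {s : ℝ} (hs0 : 0 < s) (hs1 : s ≤ 1)
    {u : EuclideanSpace ℝ (Fin (m + 1))} (hu : ‖u‖ = 1) :
    (uniformSphere (m + 1) {v | s < ⟪u, v⟫}).toReal ≤
      Gamma ((m + 1) / 2) / (√π * Gamma (m / 2)) * (1 / (s * (m - 2))) *
        exp (-(s ^ 2 * (m - 2)) / 2) := by
  have : NeZero m := ⟨by omega⟩
  have hA : MeasurableSet {v : sphere (0 : EuclideanSpace ℝ (Fin (m + 1))) 1 | s < ⟪u, v⟫} :=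
    measurableSet_lt measurable_const (by fun_prop)
  have hball : (volume (ball (0 : EuclideanSpace ℝ (Fin (m + 1))) 1)).toReal =
      √π ^ (m + 1) / Gamma ((m + 1 : ℕ) / 2 + 1) := by
    rw [EuclideanSpace.volume_ball, Fintype.card_fin, ENNReal.ofReal_one, one_pow, one_mul,
      ENNReal.toReal_ofReal (by positivity)]
  have hI := integral_capRadius_pow_le m hs0 hs1 (NeZero.ne m)
  have hI0 : 0 ≤ ∫ a in Ioo 0 1, capRadius s a ^ m :=
    setIntegral_nonneg measurableSet_Ioo fun a ha => pow_nonneg (capRadius_nonneg hs0 ha.1.le) m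
  rw [uniformSphere_apply hA, Ioo_smul_image_coe_setOf_lt_inner, ENNReal.toReal_div, hball]
  calc _ ≤ (√π ^ m / Gamma (m / 2 + 1) * ∫ a in Ioo 0 1, capRadius s a ^ m) /
        (√π ^ (m + 1) / Gamma ((m + 1 : ℕ) / 2 + 1)) := by
        gcongr
        exact ENNReal.toReal_le_of_le_ofReal (by positivity) (volume_cone_le hs0 hu)
    _ ≤ (√π ^ m / Gamma (m / 2 + 1) * (exp (-(s ^ 2 * m) / 2) * (s / (m + 1) + 1 / (s * m)))) /
        (√π ^ (m + 1) / Gamma ((m + 1 : ℕ) / 2 + 1)) := by gcongr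
    _ = Gamma ((m + 1) / 2) / (√π * Gamma (m / 2)) *
        ((m + 1) / m * (exp (-(s ^ 2 * m) / 2) * (s / (m + 1) + 1 / (s * m)))) := by
      rw [mul_div_right_comm, sqrt_pi_pow_div_Gamma_div_succ (NeZero.ne m)]
      ring
    _ ≤ _ := by
      rw [mul_assoc _ (1 / _)]
      exact mul_le_mul_of_nonneg_left
        (succ_div_mul_exp_mul_le (by exact_mod_cast (by omega : 2 < m)) hs0) (by positivity)

theorem stmt_6_general (n : ℕ) (hn : 4 ≤ n) (x : EuclideanSpace ℝ (Fin n))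
    (r : ℝ) (hr0 : 0 < r) (hrx : r ≤ ‖x‖) :
    ((uniformSphere n) {v | ⟪x, (v : EuclideanSpace ℝ (Fin n))⟫ ≤ r}).toReal ≥
      1 - (Real.Gamma ((n : ℝ) / 2) / (Real.sqrt Real.pi * Real.Gamma (((n : ℝ) - 1) / 2))) *
        (‖x‖ / (r * ((n : ℝ) - 3))) * Real.exp (-(r ^ 2 * ((n : ℝ) - 3)) / (2 * ‖x‖ ^ 2)) := by
  obtain ⟨m, rfl⟩ : ∃ m, n = m + 1 := ⟨n - 1, by omega⟩
  have hx : 0 < ‖x‖ := hr0.trans_le hrx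
  have hu : ‖‖x‖⁻¹ • x‖ = 1 := by rw [norm_smul, norm_inv, norm_norm, inv_mul_cancel₀ hx.ne']
  have hevent : {v : sphere (0 : EuclideanSpace ℝ (Fin (m + 1))) 1 | ⟪x, v⟫ ≤ r} =
      {v : sphere (0 : EuclideanSpace ℝ (Fin (m + 1))) 1 | r / ‖x‖ < ⟪‖x‖⁻¹ • x, v⟫}ᶜ := by
    ext v
    simp [real_inner_smul_left, inv_mul_eq_div, div_lt_div_iff_of_pos_right hx]
  rw [hevent, ← measureReal_def,
    probReal_compl_eq_one_sub (measurableSet_lt measurable_const (by fun_prop)), measureReal_def]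
  convert sub_le_sub_left (uniformSphere_inner_gt_le (by omega) (div_pos hr0 hx)
    ((div_le_one hx).2 hrx) hu) 1 using 2
  rw [Nat.cast_add_one, add_sub_cancel_right, show (m : ℝ) + 1 - 3 = m - 2 by ring]
  field_simp

theorem stmt_6 (n : ℕ) (hn : 4 ≤ n) (x : EuclideanSpace ℝ (Fin n)) (hx : x ≠ 0)
    (r : ℝ) (hr0 : 0 < r) (hrx : r ≤ ‖x‖) :
    ((uniformSphere n) {v | ⟪x, (v : EuclideanSpace ℝ (Fin n))⟫ ≤ r}).toReal ≥
      1 - (Real.Gamma ((n : ℝ) / 2) / (Real.sqrt Real.pi * Real.Gamma (((n : ℝ) - 1) / 2))) *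
        (‖x‖ / (r * ((n : ℝ) - 3))) * Real.exp (-(r ^ 2 * ((n : ℝ) - 3)) / (2 * ‖x‖ ^ 2)) :=
  stmt_6_general n hn x r hr0 hrx
end

section
/- Let φ denote the standard Gaussian density on ℝ^n. For any bounded measurable set K ⊆ ℝ^n, (d/dt) ∫_{(1+t)K} φ(x) dx evaluated at t = 0 equals ∫_K (n - ‖y‖²) φ(y) dy. -/
/-! Substituting `x = s • y` gives `∫_{s K} f = s ^ n • ∫_K f (s • y)`. The derivative of
`s ↦ ∫_K f (s • y)` is obtained by differentiating under the integral sign, the integrand's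
`s`-derivative `Df(s • y) y` being bounded by compactness of `[s - 1, s + 1] × closure K`.
The product rule at `s = 1` then gives `∫_K (n f(y) + Df(y) y)`, and for the Gaussian
`Dφ(y) y = -‖y‖² φ(y)`. -/

open MeasureTheory
open scoped Pointwise

theorem Continuous.integrableOn_of_isBounded {X E : Type*} [MetricSpace X] [ProperSpace X]
    [MeasurableSpace X] [OpensMeasurableSpace X] [NormedAddCommGroup E] {μ : Measure X}
    [IsFiniteMeasureOnCompacts μ] {f : X → E} {K : Set X}
    (hf : Continuous f) (hKb : Bornology.IsBounded K) : IntegrableOn f K μ :=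
  (hf.continuousOn.integrableOn_compact hKb.isCompact_closure).mono_set subset_closure

section Dilation

variable {E F : Type*} [NormedAddCommGroup E] [NormedSpace ℝ E] [FiniteDimensional ℝ E]
  [MeasurableSpace E] [BorelSpace E] [NormedAddCommGroup F] [NormedSpace ℝ F]
  {μ : Measure E} {f : E → F} {K : Set E}

theorem hasDerivAt_setIntegral_comp_smul [IsFiniteMeasureOnCompacts μ] (hf : ContDiff ℝ 1 f)
    (hK : MeasurableSet K) (hKb : Bornology.IsBounded K) (s : ℝ) :
    HasDerivAt (fun t : ℝ => ∫ y in K, f (t • y) ∂μ)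
      (∫ y in K, fderiv ℝ f (s • y) y ∂μ) s := by
  have hdf : Continuous fun p : ℝ × E => fderiv ℝ f (p.1 • p.2) p.2 :=
    ((hf.continuous_fderiv one_ne_zero).comp (by fun_prop)).clm_apply continuous_snd
  obtain ⟨R, hR⟩ := hKb.subset_closedBall 0
  obtain ⟨C, hC⟩ := ((isCompact_closedBall s 1).prod
    (isCompact_closedBall 0 R)).exists_bound_of_continuousOn hdf.continuousOn
  have hbound : ∀ᵐ y ∂μ.restrict K, ∀ t ∈ Metric.ball s 1,
      ‖fderiv ℝ f (t • y) y‖ ≤ C := by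
    filter_upwards [ae_restrict_mem hK] with y hy t ht
    exact hC (t, y) ⟨Metric.ball_subset_closedBall ht, hR hy⟩
  have hderiv : ∀ᵐ y ∂μ.restrict K, ∀ t ∈ Metric.ball s 1,
      HasDerivAt (fun t : ℝ => f (t • y)) (fderiv ℝ f (t • y) y) t := by
    refine .of_forall fun y t _ => ?_
    simpa [Function.comp_def] using
      (hf.differentiable one_ne_zero (t • y)).hasFDerivAt.comp_hasDerivAt t
        ((hasDerivAt_id t).smul_const y)
  exact (hasDerivAt_integral_of_dominated_loc_of_deriv_le (Metric.ball_mem_nhds s one_pos)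
    (.of_forall fun t => (hf.continuous.comp (continuous_const_smul t)).aestronglyMeasurable)
    ((hf.continuous.comp (continuous_const_smul s)).integrableOn_of_isBounded hKb)
    (hdf.comp (.prodMk_right s)).aestronglyMeasurable hbound
    (integrableOn_const hKb.measure_lt_top.ne) hderiv).2

theorem hasDerivAt_setIntegral_smul_set [CompleteSpace F] [μ.IsAddHaarMeasure]
    (hf : ContDiff ℝ 1 f) (hK : MeasurableSet K) (hKb : Bornology.IsBounded K) :
    HasDerivAt (fun s : ℝ => ∫ x in s • K, f x ∂μ)
      (∫ y in K, ((Module.finrank ℝ E : ℝ) • f y + fderiv ℝ f y y) ∂μ) 1 := by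
  set n := Module.finrank ℝ E
  have hscale : (fun s : ℝ => s ^ n • ∫ y in K, f (s • y) ∂μ) =ᶠ[nhds 1]
      fun s => ∫ x in s • K, f x ∂μ := by
    filter_upwards [eventually_gt_nhds one_pos] with s hs
    rw [Measure.setIntegral_comp_smul_of_pos μ f K hs, smul_inv_smul₀ (pow_pos hs n).ne']
  have hint : IntegrableOn f K μ := hf.continuous.integrableOn_of_isBounded hKb
  have hint' : IntegrableOn (fun y => fderiv ℝ f y y) K μ :=
    ((hf.continuous_fderiv one_ne_zero).clm_apply continuous_id).integrableOn_of_isBounded hKb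
  convert ((hasDerivAt_pow n (1 : ℝ)).smul
    (hasDerivAt_setIntegral_comp_smul hf hK hKb 1)).congr_of_eventuallyEq hscale.symm using 1
  simp only [one_pow, one_smul, mul_one]
  rw [integral_add (f := fun y => (n : ℝ) • f y) (hint.smul _) hint', integral_smul, add_comm]

end Dilation

theorem fderiv_gaussian_apply_self {E : Type*} [NormedAddCommGroup E] [InnerProductSpace ℝ E]
    (c : ℝ) (y : E) :
    fderiv ℝ (fun x : E => c * Real.exp (-‖x‖ ^ 2 / 2)) y y =
      -‖y‖ ^ 2 * (c * Real.exp (-‖y‖ ^ 2 / 2)) := by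
  have hprofile : HasDerivAt (fun r : ℝ => c * Real.exp (-r / 2))
      (c * (Real.exp (-‖y‖ ^ 2 / 2) * (-1 / 2))) (‖y‖ ^ 2) :=
    (((hasDerivAt_id _).neg.div_const 2).exp).const_mul c
  have hgauss : HasFDerivAt (fun x : E => c * Real.exp (-‖x‖ ^ 2 / 2))
      ((c * (Real.exp (-‖y‖ ^ 2 / 2) * (-1 / 2))) • (2 • innerSL ℝ y)) y :=
    hprofile.comp_hasFDerivAt (f := fun x : E => ‖x‖ ^ 2) y
      (hasStrictFDerivAt_norm_sq y).hasFDerivAt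
  rw [hgauss.fderiv]
  simp only [smul_apply, coe_innerSL_apply, real_inner_self_eq_norm_sq,
    nsmul_eq_mul, smul_eq_mul]
  ring

theorem stmt_9 (n : ℕ) (K : Set (EuclideanSpace ℝ (Fin n)))
    (hK : MeasurableSet K) (hKb : Bornology.IsBounded K) :
    HasDerivAt
      (fun t : ℝ => ∫ x in (1 + t) • K,
        (2 * Real.pi) ^ (-(n : ℝ) / 2) * Real.exp (-‖x‖ ^ 2 / 2))
      (∫ y in K, ((n : ℝ) - ‖y‖ ^ 2) *
        ((2 * Real.pi) ^ (-(n : ℝ) / 2) * Real.exp (-‖y‖ ^ 2 / 2)))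
      0 := by
  set φ : EuclideanSpace ℝ (Fin n) → ℝ :=
    fun x => (2 * Real.pi) ^ (-(n : ℝ) / 2) * Real.exp (-‖x‖ ^ 2 / 2)
  have hφ : ContDiff ℝ 1 φ := contDiff_const.mul ((contDiff_norm_sq ℝ).neg.div_const 2).exp
  have hval : ∀ y, ((n : ℝ) - ‖y‖ ^ 2) * φ y =
      (Module.finrank ℝ (EuclideanSpace ℝ (Fin n)) : ℝ) • φ y + fderiv ℝ φ y y := by
    intro y
    rw [finrank_euclideanSpace_fin, fderiv_gaussian_apply_self, smul_eq_mul]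
    ring
  change HasDerivAt (fun t : ℝ => ∫ x in (1 + t) • K, φ x)
    (∫ y in K, ((n : ℝ) - ‖y‖ ^ 2) * φ y) 0
  simp_rw [hval]
  have h := hasDerivAt_setIntegral_smul_set (μ := volume) hφ hK hKb
  exact (show HasDerivAt _ _ ((1 : ℝ) + 0) by rwa [add_zero]).comp_const_add 1 0
end
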